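/- arXiv:1205.3954 — 2 statements merged into one kernel-verified Lean document; each statement's English description precedes it below -/
import Mathlib

section
/- If Y = (Y₁,...,Y_d) has a multivariate extreme value distribution with continuous marginal distribution functions F₁,...,F_d and the same copula C as a vector X with unit Fréchet margins and tail dependence function l, then for λ ∈ (0,∞)^d, E[max_{1≤j≤d} F_j(Y_j)^{λ_j}] = E[max_{1≤j≤d} F(X_j)^{λ_j}] = l(λ₁⁻¹,...,λ_d⁻¹)/(1 + l(λ₁⁻¹,...,λ_d⁻¹)), i.e., this expectation depends only on the copula. -/
open MeasureTheory Finset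

/-- Unit Fréchet distribution function F(x) = exp(-1/x). -/
noncomputable def frechetCDF (x : ℝ) : ℝ := Real.exp (-x⁻¹)

/-!
For `s ∈ (0, 1)` the event `max_j U_j ^ λ_j ≤ s` is `∀ j, U_j ≤ s ^ (1 / λ_j)`, so by the copula
assumption `max_j F_j(Y_j) ^ λ_j` has the same distribution function as its Fréchet counterpart.
There `F(x) ≤ s ^ (1 / λ)` means `0 < x ≤ λ / (-log s)`, and max-stability gives
`G(t λ) = G(λ) ^ (1 / t)`; at `t = 1 / (-log s)` this is `s ^ c` with `c = -log G(λ) = l(1 / λ)`.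
A `[0, 1]`-valued variable with `P(M ≤ s) = s ^ c` has mean `∫₀¹ (1 - s ^ c) ds = c / (1 + c)`
by the layer-cake formula.
-/

open Filter Topology

lemma integral_eq_div_one_add_of_measureReal_le_eq_rpow
    {Ω : Type*} [MeasurableSpace Ω] {μ : Measure Ω} [IsProbabilityMeasure μ]
    {M : Ω → ℝ} (hM : AEMeasurable M μ) (hM01 : ∀ᵐ ω ∂μ, M ω ∈ Set.Icc (0 : ℝ) 1)
    {c : ℝ} (hc : -1 < c) (hdist : ∀ s ∈ Set.Ioo (0 : ℝ) 1, μ.real {ω | M ω ≤ s} = s ^ c) :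
    ∫ ω, M ω ∂μ = c / (1 + c) := by
  have hint : Integrable M μ := by
    refine Integrable.mono' (integrable_const 1) hM.aestronglyMeasurable ?_
    filter_upwards [hM01] with ω hω
    rw [Real.norm_eq_abs, abs_of_nonneg hω.1]
    exact hω.2
  have htail : Set.EqOn (fun s => μ.real {ω | s < M ω})
      ((Set.Ioo 0 1).indicator fun s => 1 - s ^ c) (Set.Ioi 0) := by
    intro s (hs0 : 0 < s)
    by_cases hs1 : s < 1
    · have hcompl : {ω | s < M ω} = {ω | M ω ≤ s}ᶜ := by ext; simp
      dsimp only
      rw [Set.indicator_of_mem (show s ∈ Set.Ioo 0 1 from ⟨hs0, hs1⟩), ← hdist s ⟨hs0, hs1⟩,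
        hcompl, probReal_compl_eq_one_sub₀ (nullMeasurableSet_le hM aemeasurable_const)]
    · rw [Set.indicator_of_notMem fun h => hs1 h.2, measureReal_eq_zero_iff]
      exact measure_mono_null (fun ω (hω : s < M ω) (h : M ω ∈ Set.Icc (0 : ℝ) 1) =>
        hs1 (hω.trans_le h.2)) (ae_iff.mp hM01)
  have hpow : IntervalIntegrable (fun s : ℝ => s ^ c) volume 0 1 :=
    intervalIntegral.intervalIntegrable_rpow' hc
  rw [hint.integral_eq_integral_meas_lt (hM01.mono fun ω hω => hω.1),
    setIntegral_congr_fun measurableSet_Ioi htail, setIntegral_indicator measurableSet_Ioo,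
    Set.inter_eq_self_of_subset_right Set.Ioo_subset_Ioi_self, ← integral_Ioc_eq_integral_Ioo,
    ← intervalIntegral.integral_of_le zero_le_one,
    intervalIntegral.integral_sub intervalIntegrable_const hpow, integral_rpow (Or.inl hc)]
  have hc1 : c + 1 ≠ 0 := by linarith
  have h1c : 1 + c ≠ 0 := by linarith
  simp only [intervalIntegral.integral_const, Real.one_rpow, Real.zero_rpow hc1]
  field_simp
  ring

lemma Finset.sup'_rpow_mem_Icc {ι : Type*} {S : Finset ι} (hS : S.Nonempty) {u lam : ι → ℝ}
    (hu : ∀ j ∈ S, u j ∈ Set.Icc (0 : ℝ) 1) (hlam : ∀ j ∈ S, 0 ≤ lam j) :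
    S.sup' hS (fun j => u j ^ lam j) ∈ Set.Icc (0 : ℝ) 1 := by
  obtain ⟨j₀, hj₀⟩ := hS
  exact ⟨Finset.le_sup'_of_le _ hj₀ (Real.rpow_nonneg (hu j₀ hj₀).1 _),
    Finset.sup'_le _ _ fun j hj => Real.rpow_le_one (hu j hj).1 (hu j hj).2 (hlam j hj)⟩

lemma measureReal_sup'_rpow_le {Ω ι : Type*} [MeasurableSpace Ω] [Fintype ι] (μ : Measure Ω)
    (hι : (Finset.univ : Finset ι).Nonempty) {U : ι → Ω → ℝ} (hU : ∀ j ω, 0 ≤ U j ω)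
    {lam : ι → ℝ} (hlam : ∀ j, 0 < lam j) {s : ℝ} (hs : 0 ≤ s) :
    μ.real {ω | Finset.univ.sup' hι (fun j => U j ω ^ lam j) ≤ s}
      = μ.real {ω | ∀ j, U j ω ≤ s ^ (lam j)⁻¹} := by
  congr 1
  ext ω
  simp only [Finset.sup'_le_iff, Finset.mem_univ, true_imp_iff]
  exact forall_congr' fun j => (Real.le_rpow_inv_iff_of_pos (hU j ω) hs (hlam j)).symm

lemma frechetCDF_pos (x : ℝ) : 0 < frechetCDF x := Real.exp_pos _

lemma frechetCDF_le_one {x : ℝ} (hx : 0 ≤ x) : frechetCDF x ≤ 1 :=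
  Real.exp_le_one_iff.mpr (neg_nonpos.mpr (inv_nonneg.mpr hx))

lemma frechetCDF_le_exp_neg_iff {x b : ℝ} (hb : 0 < b) :
    frechetCDF x ≤ Real.exp (-b) ↔ 0 < x ∧ x ≤ b⁻¹ := by
  rw [frechetCDF, Real.exp_le_exp, neg_le_neg_iff]
  rcases le_or_gt x 0 with hx | hx
  · simp only [hx.not_gt, false_and, iff_false, not_le]
    exact (inv_nonpos.mpr hx).trans_lt hb
  · rw [le_inv_comm₀ hb hx]
    simp [hx]

lemma frechetCDF_le_rpow_inv_iff {x s a : ℝ} (hs0 : 0 < s) (hs1 : s < 1) (ha : 0 < a) :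
    frechetCDF x ≤ s ^ a⁻¹ ↔ 0 < x ∧ x ≤ (-Real.log s)⁻¹ * a := by
  rw [Real.rpow_def_of_pos hs0, ← neg_neg (Real.log s * a⁻¹), ← neg_mul,
    frechetCDF_le_exp_neg_iff (mul_pos (neg_pos.mpr (Real.log_neg hs0 hs1)) (inv_pos.mpr ha)),
    mul_inv, inv_inv]

lemma measure_nonpos_eq_zero_of_frechet {Ω : Type*} [MeasurableSpace Ω] {μ : Measure Ω}
    [IsFiniteMeasure μ] {X : Ω → ℝ}
    (hX : ∀ t : ℝ, 0 < t → μ.real {ω | X ω ≤ t} = frechetCDF t) :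
    μ {ω | X ω ≤ 0} = 0 := by
  have hlim : Tendsto frechetCDF (𝓝[>] 0) (𝓝 0) :=
    Real.tendsto_exp_atBot.comp (tendsto_neg_atTop_atBot.comp tendsto_inv_nhdsGT_zero)
  have hle : μ.real {ω | X ω ≤ 0} ≤ 0 :=
    ge_of_tendsto hlim <| eventually_nhdsWithin_of_forall fun t (ht : 0 < t) =>
      hX t ht ▸ measureReal_mono fun ω (hω : X ω ≤ 0) => hω.trans ht.le
  exact (measureReal_eq_zero_iff).mp (le_antisymm hle measureReal_nonneg)

lemma ae_pos_of_frechet {Ω ι : Type*} [MeasurableSpace Ω] {μ : Measure Ω} [IsFiniteMeasure μ]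
    [Countable ι] {X : ι → Ω → ℝ}
    (hX : ∀ j, ∀ t : ℝ, 0 < t → μ.real {ω | X j ω ≤ t} = frechetCDF t) :
    ∀ᵐ ω ∂μ, ∀ j, 0 < X j ω :=
  ae_all_iff.mpr fun j => by
    simpa only [ae_iff, not_lt] using measure_nonpos_eq_zero_of_frechet (hX j)

def IsMaxStable {Ω ι : Type*} [MeasurableSpace Ω] (μ : Measure Ω) (X : ι → Ω → ℝ) : Prop :=
  ∀ t : ℝ, 0 < t → ∀ x : ι → ℝ, (∀ j, 0 < x j) →
    μ.real {ω | ∀ j, X j ω ≤ t * x j} ^ t = μ.real {ω | ∀ j, X j ω ≤ x j}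

namespace IsMaxStable

variable {Ω ι : Type*} [MeasurableSpace Ω] {μ : Measure Ω} {X : ι → Ω → ℝ}

lemma measureReal_le_mul (hX : IsMaxStable μ X) {t : ℝ} (ht : 0 < t) {x : ι → ℝ}
    (hx : ∀ j, 0 < x j) :
    μ.real {ω | ∀ j, X j ω ≤ t * x j} = μ.real {ω | ∀ j, X j ω ≤ x j} ^ t⁻¹ := by
  rw [← hX t ht x hx, Real.rpow_rpow_inv measureReal_nonneg ht.ne']

-- The events `X ≤ (n + 1) • x` exhaust `Ω`, and each has probability `G(x) ^ (1 / (n + 1))`.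
lemma measureReal_le_pos [IsProbabilityMeasure μ] [Finite ι] (hX : IsMaxStable μ X)
    {x : ι → ℝ} (hx : ∀ j, 0 < x j) : 0 < μ.real {ω | ∀ j, X j ω ≤ x j} := by
  refine measureReal_nonneg.lt_of_ne' fun h0 => ?_
  have hnull (n : ℕ) : μ {ω | ∀ j, X j ω ≤ (n + 1) * x j} = 0 := by
    have := hX (n + 1) (by positivity) x hx
    rwa [h0, Real.rpow_eq_zero measureReal_nonneg (by positivity), measureReal_eq_zero_iff]
      at this
  have hcover : ⋃ n : ℕ, {ω | ∀ j, X j ω ≤ (n + 1) * x j} = Set.univ := by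
    refine Set.eq_univ_of_forall fun ω => Set.mem_iUnion.mpr ?_
    refine (eventually_all.mpr fun j => ?_).exists (f := atTop)
    exact ((tendsto_natCast_atTop_atTop.atTop_add tendsto_const_nhds).atTop_mul_const
      (hx j)).eventually_ge_atTop (X j ω)
  simpa [hcover] using measure_iUnion_null hnull

end IsMaxStable

lemma measureReal_frechetCDF_le_rpow_inv {Ω ι : Type*} [MeasurableSpace Ω] {μ : Measure Ω}
    [IsProbabilityMeasure μ] [Finite ι] {X : ι → Ω → ℝ}
    (hmarg : ∀ j, ∀ t : ℝ, 0 < t → μ.real {ω | X j ω ≤ t} = frechetCDF t)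
    (hX : IsMaxStable μ X) {lam : ι → ℝ} (hlam : ∀ j, 0 < lam j) {s : ℝ} (hs0 : 0 < s)
    (hs1 : s < 1) :
    μ.real {ω | ∀ j, frechetCDF (X j ω) ≤ s ^ (lam j)⁻¹}
      = s ^ (-Real.log (μ.real {ω | ∀ j, X j ω ≤ lam j})) := by
  have ht : 0 < (-Real.log s)⁻¹ := inv_pos.mpr (neg_pos.mpr (Real.log_neg hs0 hs1))
  have hae : {ω | ∀ j, frechetCDF (X j ω) ≤ s ^ (lam j)⁻¹}
      =ᵐ[μ] {ω | ∀ j, X j ω ≤ (-Real.log s)⁻¹ * lam j} := by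
    filter_upwards [ae_pos_of_frechet hmarg] with ω hω
    refine propext (forall_congr' fun j => ?_)
    rw [frechetCDF_le_rpow_inv_iff hs0 hs1 (hlam j), and_iff_right (hω j)]
  rw [measureReal_congr hae, hX.measureReal_le_mul ht hlam, inv_inv,
    Real.rpow_def_of_pos (hX.measureReal_le_pos hlam), Real.rpow_def_of_pos hs0]
  ring_nf

/-- E[max_j F_j(Y_j)^{λ_j}] depends only on the copula: it equals
E[max_j F(X_j)^{λ_j}] = l(λ⁻¹)/(1+l(λ⁻¹)) for the unit-Fréchet representative X. -/
theorem stmt3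
    {Ω : Type*} [MeasurableSpace Ω] (μ : Measure Ω) [IsProbabilityMeasure μ]
    {Ω' : Type*} [MeasurableSpace Ω'] (ν : Measure Ω') [IsProbabilityMeasure ν]
    {d : ℕ} (hd : 0 < d)
    (X : Fin d → Ω → ℝ) (hXm : ∀ j, Measurable (X j))
    (hmarg : ∀ j, ∀ t : ℝ, 0 < t → (μ {ω | X j ω ≤ t}).toReal = frechetCDF t)
    (hms : ∀ t : ℝ, 0 < t → ∀ x : Fin d → ℝ, (∀ j, 0 < x j) →
      ((μ {ω | ∀ j, X j ω ≤ t * x j}).toReal) ^ t = (μ {ω | ∀ j, X j ω ≤ x j}).toReal)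
    (l : (Fin d → ℝ) → ℝ)
    (hl : ∀ x : Fin d → ℝ, (∀ j, 0 ≤ x j) →
      l x = - Real.log ((μ {ω | ∀ j, 0 < x j → X j ω ≤ (x j)⁻¹}).toReal))
    (Y : Fin d → Ω' → ℝ) (hYm : ∀ j, Measurable (Y j))
    (Fm : Fin d → ℝ → ℝ) (hFc : ∀ j, Continuous (Fm j))
    -- Fm j is the marginal distribution function of Y j
    (hYmarg : ∀ j, ∀ t : ℝ, (ν {ω | Y j ω ≤ t}).toReal = Fm j t)
    -- Y has the same copula as X: the probability integral transforms have the same law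
    (hcop : ∀ u : Fin d → ℝ, (∀ j, u j ∈ Set.Icc (0 : ℝ) 1) →
      (ν {ω | ∀ j, Fm j (Y j ω) ≤ u j}).toReal
        = (μ {ω | ∀ j, frechetCDF (X j ω) ≤ u j}).toReal)
    (lam : Fin d → ℝ) (hlam : ∀ j, 0 < lam j) :
    (∫ ω, Finset.univ.sup' ⟨⟨0, hd⟩, Finset.mem_univ _⟩
        (fun j => Fm j (Y j ω) ^ lam j) ∂ν
      = ∫ ω, Finset.univ.sup' ⟨⟨0, hd⟩, Finset.mem_univ _⟩
        (fun j => frechetCDF (X j ω) ^ lam j) ∂μ) ∧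
    (∫ ω, Finset.univ.sup' ⟨⟨0, hd⟩, Finset.mem_univ _⟩
        (fun j => Fm j (Y j ω) ^ lam j) ∂ν
      = (l fun j => (lam j)⁻¹) / (1 + (l fun j => (lam j)⁻¹))) := by
  set G := μ.real {ω | ∀ j, X j ω ≤ lam j}
  have hXmax : IsMaxStable μ X := hms
  have hlG : (l fun j => (lam j)⁻¹) = -Real.log G := by
    rw [hl _ fun j => (inv_pos.mpr (hlam j)).le]
    simp only [inv_pos, hlam, inv_inv, true_imp_iff]
    rfl
  have hc : -1 < -Real.log G := by
    linarith [Real.log_nonpos measureReal_nonneg (measureReal_le_one : G ≤ 1)]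
  have hdistX (s : ℝ) (hs : s ∈ Set.Ioo (0 : ℝ) 1) :
      μ.real {ω | ∀ j, frechetCDF (X j ω) ≤ s ^ (lam j)⁻¹} = s ^ (-Real.log G) :=
    measureReal_frechetCDF_le_rpow_inv hmarg hXmax hlam hs.1 hs.2
  have hFm (j : Fin d) (t : ℝ) : Fm j t ∈ Set.Icc (0 : ℝ) 1 :=
    hYmarg j t ▸ ⟨measureReal_nonneg, measureReal_le_one⟩
  have hEY : ∫ ω, Finset.univ.sup' ⟨⟨0, hd⟩, Finset.mem_univ _⟩
      (fun j => Fm j (Y j ω) ^ lam j) ∂ν = -Real.log G / (1 + -Real.log G) := by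
    refine integral_eq_div_one_add_of_measureReal_le_eq_rpow (by fun_prop)
      (ae_of_all _ fun ω => Finset.sup'_rpow_mem_Icc _ (fun j _ => hFm j _)
        fun j _ => (hlam j).le) hc fun s hs => ?_
    refine (measureReal_sup'_rpow_le ν _ (fun j ω => (hFm j _).1) hlam hs.1.le).trans ?_
    rw [← hdistX s hs]
    exact hcop _ fun j => ⟨Real.rpow_nonneg hs.1.le _,
      Real.rpow_le_one hs.1.le hs.2.le (inv_pos.mpr (hlam j)).le⟩
  have hEX : ∫ ω, Finset.univ.sup' ⟨⟨0, hd⟩, Finset.mem_univ _⟩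
      (fun j => frechetCDF (X j ω) ^ lam j) ∂μ = -Real.log G / (1 + -Real.log G) := by
    refine integral_eq_div_one_add_of_measureReal_le_eq_rpow (by unfold frechetCDF; fun_prop)
      ?_ hc fun s hs => ?_
    · filter_upwards [ae_pos_of_frechet hmarg] with ω hω
      exact Finset.sup'_rpow_mem_Icc _
        (fun j _ => ⟨(frechetCDF_pos _).le, frechetCDF_le_one (hω j).le⟩) fun j _ => (hlam j).le
    · exact (measureReal_sup'_rpow_le μ _ (fun j ω => (frechetCDF_pos _).le) hlam hs.1.le).trans
        (hdistX s hs)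
  rw [hlG]
  exact ⟨hEY.trans hEX.symm, hEY⟩
end

section
/- If X has MEV distribution with unit Fréchet margins and overall extremal coefficient ε_X, then R(X,1) = E[max_j F(X_j) − min_j F(X_j)] = (ε_X − 1)/(ε_X + 1) when d = 2; i.e., for a bivariate extreme value vector with unit Fréchet margins, E[|F(X₁) − F(X₂)|] = (ε_X − 1)/(ε_X + 1) where ε_X = l(1,1). -/
/-!
Write `U = F(X₁)`, `V = F(X₂)`. Since `|U - V| = 2 max(U, V) - (U + V)` and `U`, `V` are uniform
on `[0, 1]`, it suffices to show `E max(U, V) = ε/(ε + 1)`. Max-stability with `x = y = 1` gives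
`P(X₁ ≤ s, X₂ ≤ s) = p^(1/s) = exp(-ε/s)` where `p = P(X₁ ≤ 1, X₂ ≤ 1) = exp(-ε)`, so
`P(max(U, V) ≤ t) = t^ε`, whose mean is `ε/(ε + 1)`.
-/

open MeasureTheory

open Set Filter Topology

lemma abs_sub_eq_two_mul_max_sub_add (a b : ℝ) : |a - b| = 2 * max a b - (a + b) := by
  linarith [max_sub_min_eq_abs' a b, min_add_max a b]

section Frechet

lemma measurable_frechetCDF : Measurable frechetCDF := by
  unfold frechetCDF; fun_prop

lemma frechetCDF_mem_Icc {x : ℝ} (hx : 0 ≤ x) : frechetCDF x ∈ Icc 0 1 :=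
  ⟨(Real.exp_pos _).le, Real.exp_le_one_iff.2 (neg_nonpos.2 (inv_nonneg.2 hx))⟩

lemma frechetCDF_strictMonoOn : StrictMonoOn frechetCDF (Ioi 0) :=
  fun _ hx _ _ hxy => Real.exp_lt_exp.2 (neg_lt_neg (inv_strictAnti₀ hx hxy))

lemma frechetCDF_inv_neg_log {t : ℝ} (ht : 0 < t) : frechetCDF (-Real.log t)⁻¹ = t := by
  simp [frechetCDF, Real.exp_log ht]

lemma frechetCDF_le_iff {x t : ℝ} (hx : 0 < x) (ht₀ : 0 < t) (ht₁ : t < 1) :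
    frechetCDF x ≤ t ↔ x ≤ (-Real.log t)⁻¹ := by
  conv_lhs => rw [← frechetCDF_inv_neg_log ht₀]
  exact frechetCDF_strictMonoOn.le_iff_le hx (inv_pos.2 (neg_pos.2 (Real.log_neg ht₀ ht₁)))

lemma tendsto_frechetCDF_nhdsGT_zero : Tendsto frechetCDF (𝓝[>] 0) (𝓝 0) :=
  Real.tendsto_exp_atBot.comp (tendsto_neg_atTop_atBot.comp tendsto_inv_nhdsGT_zero)

end Frechet

section Probability

variable {Ω : Type*} [MeasurableSpace Ω] {μ : Measure Ω}

lemma ae_pos_of_measureReal_le_eq_frechetCDF [IsFiniteMeasure μ] {X : Ω → ℝ}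
    (hX : ∀ t, 0 < t → μ.real {ω | X ω ≤ t} = frechetCDF t) : ∀ᵐ ω ∂μ, 0 < X ω := by
  have hle : ∀ᶠ t in 𝓝[>] 0, μ.real {ω | X ω ≤ 0} ≤ frechetCDF t := by
    filter_upwards [self_mem_nhdsWithin] with t ht
    exact hX t ht ▸ measureReal_mono fun ω (hω : X ω ≤ 0) => show X ω ≤ t from hω.trans ht.le
  have hzero : μ.real {ω | X ω ≤ 0} = 0 :=
    le_antisymm (ge_of_tendsto tendsto_frechetCDF_nhdsGT_zero hle) measureReal_nonneg
  rw [ae_iff]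
  simpa [measureReal_eq_zero_iff] using hzero

lemma measureReal_frechetCDF_comp_le {X : Ω → ℝ} (hX : ∀ᵐ ω ∂μ, 0 < X ω) {t : ℝ}
    (ht₀ : 0 < t) (ht₁ : t < 1) :
    μ.real {ω | frechetCDF (X ω) ≤ t} = μ.real {ω | X ω ≤ (-Real.log t)⁻¹} := by
  refine measureReal_congr (eventuallyEq_set.2 ?_)
  filter_upwards [hX] with ω hω
  exact frechetCDF_le_iff hω ht₀ ht₁

lemma measureReal_max_frechetCDF_comp_le {X₁ X₂ : Ω → ℝ} (hX₁ : ∀ᵐ ω ∂μ, 0 < X₁ ω)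
    (hX₂ : ∀ᵐ ω ∂μ, 0 < X₂ ω) {t : ℝ} (ht₀ : 0 < t) (ht₁ : t < 1) :
    μ.real {ω | max (frechetCDF (X₁ ω)) (frechetCDF (X₂ ω)) ≤ t}
      = μ.real {ω | X₁ ω ≤ (-Real.log t)⁻¹ ∧ X₂ ω ≤ (-Real.log t)⁻¹} := by
  refine measureReal_congr (eventuallyEq_set.2 ?_)
  filter_upwards [hX₁, hX₂] with ω hω₁ hω₂
  simp only [max_le_iff, frechetCDF_le_iff hω₁ ht₀ ht₁, frechetCDF_le_iff hω₂ ht₀ ht₁]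

lemma ae_frechetCDF_comp_mem_Icc {X : Ω → ℝ} (hX : ∀ᵐ ω ∂μ, 0 < X ω) :
    ∀ᵐ ω ∂μ, frechetCDF (X ω) ∈ Icc 0 1 :=
  hX.mono fun _ h => frechetCDF_mem_Icc h.le

lemma ae_max_frechetCDF_comp_mem_Icc {X₁ X₂ : Ω → ℝ} (hX₁ : ∀ᵐ ω ∂μ, 0 < X₁ ω)
    (hX₂ : ∀ᵐ ω ∂μ, 0 < X₂ ω) : ∀ᵐ ω ∂μ, max (frechetCDF (X₁ ω)) (frechetCDF (X₂ ω)) ∈ Icc 0 1 := by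
  filter_upwards [ae_frechetCDF_comp_mem_Icc hX₁, ae_frechetCDF_comp_mem_Icc hX₂] with ω h₁ h₂
  exact ⟨le_max_of_le_left h₁.1, max_le h₁.2 h₂.2⟩

lemma integral_abs_frechetCDF_comp_sub [IsFiniteMeasure μ] {X₁ X₂ : Ω → ℝ}
    (hX₁m : Measurable X₁) (hX₂m : Measurable X₂)
    (hX₁ : ∀ᵐ ω ∂μ, 0 < X₁ ω) (hX₂ : ∀ᵐ ω ∂μ, 0 < X₂ ω) :
    ∫ ω, |frechetCDF (X₁ ω) - frechetCDF (X₂ ω)| ∂μ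
      = 2 * ∫ ω, max (frechetCDF (X₁ ω)) (frechetCDF (X₂ ω)) ∂μ
        - (∫ ω, frechetCDF (X₁ ω) ∂μ + ∫ ω, frechetCDF (X₂ ω) ∂μ) := by
  have hU : Integrable (fun ω => frechetCDF (X₁ ω)) μ := .of_mem_Icc 0 1
    (measurable_frechetCDF.comp hX₁m).aemeasurable (ae_frechetCDF_comp_mem_Icc hX₁)
  have hV : Integrable (fun ω => frechetCDF (X₂ ω)) μ := .of_mem_Icc 0 1
    (measurable_frechetCDF.comp hX₂m).aemeasurable (ae_frechetCDF_comp_mem_Icc hX₂)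
  have hM : Integrable (fun ω => max (frechetCDF (X₁ ω)) (frechetCDF (X₂ ω))) μ :=
    .of_mem_Icc 0 1
      ((measurable_frechetCDF.comp hX₁m).max (measurable_frechetCDF.comp hX₂m)).aemeasurable
      (ae_max_frechetCDF_comp_mem_Icc hX₁ hX₂)
  simp_rw [abs_sub_eq_two_mul_max_sub_add]
  have hUV : Integrable (fun ω => frechetCDF (X₁ ω) + frechetCDF (X₂ ω)) μ := hU.add hV
  rw [integral_sub (hM.const_mul 2) hUV, integral_const_mul, integral_add hU hV]

variable [IsProbabilityMeasure μ]

lemma integral_eq_div_of_measureReal_le_eq_rpow {Y : Ω → ℝ} (hY : Measurable Y)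
    (hY₀₁ : ∀ᵐ ω ∂μ, Y ω ∈ Icc 0 1) {c : ℝ} (hc : -1 < c)
    (hcdf : ∀ t ∈ Ioo 0 1, μ.real {ω | Y ω ≤ t} = t ^ c) :
    ∫ ω, Y ω ∂μ = c / (c + 1) := by
  have htail : EqOn (fun t => μ.real {ω | t < Y ω}) (indicator (Ioo 0 1) (fun t => 1 - t ^ c))
      (Ioi 0) := by
    intro t ht
    rcases lt_or_ge t 1 with ht₁ | ht₁
    · rw [indicator_of_mem (show t ∈ Ioo 0 1 from ⟨ht, ht₁⟩), ← hcdf t ⟨ht, ht₁⟩,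
        ← probReal_compl_eq_one_sub (measurableSet_le hY measurable_const)]
      simp only [compl_ofPred, not_le]
    · rw [indicator_of_notMem fun h => not_lt.2 ht₁ h.2, measureReal_eq_zero_iff]
      refine measure_mono_null (fun ω hω => ?_) (ae_iff.1 hY₀₁)
      exact fun h => not_lt.2 (h.2.trans ht₁) hω
  have hint : Integrable Y μ := .of_mem_Icc 0 1 hY.aemeasurable hY₀₁
  rw [hint.integral_eq_integral_meas_lt (hY₀₁.mono fun _ h => h.1),
    setIntegral_congr_fun measurableSet_Ioi htail, setIntegral_indicator measurableSet_Ioo,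
    inter_eq_right.2 Ioo_subset_Ioi_self, ← integral_Ioc_eq_integral_Ioo,
    ← intervalIntegral.integral_of_le zero_le_one,
    intervalIntegral.integral_sub intervalIntegrable_const
      (intervalIntegral.intervalIntegrable_rpow' hc),
    intervalIntegral.integral_const, integral_rpow (Or.inl hc)]
  have : c + 1 ≠ 0 := by linarith
  rw [Real.one_rpow, Real.zero_rpow this]
  field_simp
  simp only [smul_eq_mul]; ring

lemma measureReal_add_measureReal_le_measureReal_inter_add_one {s t : Set Ω}
    (ht : MeasurableSet t) : μ.real s + μ.real t ≤ μ.real (s ∩ t) + 1 := by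
  linarith [measureReal_union_add_inter (μ := μ) (s := s) ht,
    measureReal_le_one (μ := μ) (s := s ∪ t)]

lemma integral_frechetCDF_comp {X : Ω → ℝ} (hXm : Measurable X)
    (hX : ∀ t, 0 < t → μ.real {ω | X ω ≤ t} = frechetCDF t) :
    ∫ ω, frechetCDF (X ω) ∂μ = 1 / 2 := by
  have hpos := ae_pos_of_measureReal_le_eq_frechetCDF hX
  have := integral_eq_div_of_measureReal_le_eq_rpow (Y := fun ω => frechetCDF (X ω))
    (measurable_frechetCDF.comp hXm) (ae_frechetCDF_comp_mem_Icc hpos) (c := 1) (by norm_num)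
    fun t ht => by
      rw [measureReal_frechetCDF_comp_le hpos ht.1 ht.2,
        hX _ (inv_pos.2 (neg_pos.2 (Real.log_neg ht.1 ht.2))), frechetCDF_inv_neg_log ht.1,
        Real.rpow_one]
  exact this.trans (by norm_num)

lemma integral_max_frechetCDF_comp {X₁ X₂ : Ω → ℝ} (hX₁m : Measurable X₁) (hX₂m : Measurable X₂)
    (hX₁ : ∀ᵐ ω ∂μ, 0 < X₁ ω) (hX₂ : ∀ᵐ ω ∂μ, 0 < X₂ ω) {ε : ℝ} (hε : 0 ≤ ε)
    (hdiag : ∀ s, 0 < s → μ.real {ω | X₁ ω ≤ s ∧ X₂ ω ≤ s} = Real.exp (-ε / s)) :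
    ∫ ω, max (frechetCDF (X₁ ω)) (frechetCDF (X₂ ω)) ∂μ = ε / (ε + 1) := by
  refine integral_eq_div_of_measureReal_le_eq_rpow
    (Y := fun ω => max (frechetCDF (X₁ ω)) (frechetCDF (X₂ ω)))
    ((measurable_frechetCDF.comp hX₁m).max (measurable_frechetCDF.comp hX₂m))
    (ae_max_frechetCDF_comp_mem_Icc hX₁ hX₂) (by linarith) fun t ht => ?_
  rw [measureReal_max_frechetCDF_comp_le hX₁ hX₂ ht.1 ht.2,
    hdiag _ (inv_pos.2 (neg_pos.2 (Real.log_neg ht.1 ht.2))), Real.rpow_def_of_pos ht.1,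
    div_inv_eq_mul]
  ring_nf

lemma lt_frechetCDF_two : 1 / 2 < frechetCDF 2 := by
  have := Real.add_one_lt_exp (x := -2⁻¹) (by norm_num)
  unfold frechetCDF
  linarith

lemma measureReal_le_two_and_le_two_pos {X₁ X₂ : Ω → ℝ} (hX₂m : Measurable X₂)
    (hX₁ : ∀ t, 0 < t → μ.real {ω | X₁ ω ≤ t} = frechetCDF t)
    (hX₂ : ∀ t, 0 < t → μ.real {ω | X₂ ω ≤ t} = frechetCDF t) :
    0 < μ.real {ω | X₁ ω ≤ 2 ∧ X₂ ω ≤ 2} := by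
  show 0 < μ.real ({ω | X₁ ω ≤ 2} ∩ {ω | X₂ ω ≤ 2})
  have := measureReal_add_measureReal_le_measureReal_inter_add_one (μ := μ)
    (s := {ω | X₁ ω ≤ 2}) (t := {ω | X₂ ω ≤ 2}) (measurableSet_le hX₂m measurable_const)
  rw [hX₁ 2 two_pos, hX₂ 2 two_pos] at this
  linarith [lt_frechetCDF_two]

end Probability

/-- For a bivariate extreme value vector with unit Fréchet margins,
E|F(X₁) − F(X₂)| = (ε − 1)/(ε + 1) where ε = l(1,1) is the extremal coefficient. -/
theorem stmt10
    {Ω : Type*} [MeasurableSpace Ω] (μ : Measure Ω) [IsProbabilityMeasure μ]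
    (X₁ X₂ : Ω → ℝ) (hX₁ : Measurable X₁) (hX₂ : Measurable X₂)
    (hmarg₁ : ∀ t : ℝ, 0 < t → (μ {ω | X₁ ω ≤ t}).toReal = frechetCDF t)
    (hmarg₂ : ∀ t : ℝ, 0 < t → (μ {ω | X₂ ω ≤ t}).toReal = frechetCDF t)
    (hms : ∀ t : ℝ, 0 < t → ∀ x y : ℝ, 0 < x → 0 < y →
      ((μ {ω | X₁ ω ≤ t * x ∧ X₂ ω ≤ t * y}).toReal) ^ t
        = (μ {ω | X₁ ω ≤ x ∧ X₂ ω ≤ y}).toReal)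
    (l : ℝ → ℝ → ℝ)
    (hl : ∀ x y : ℝ, 0 ≤ x → 0 ≤ y →
      l x y = - Real.log ((μ {ω | (0 < x → X₁ ω ≤ x⁻¹) ∧ (0 < y → X₂ ω ≤ y⁻¹)}).toReal)) :
    ∫ ω, |frechetCDF (X₁ ω) - frechetCDF (X₂ ω)| ∂μ
      = (l 1 1 - 1) / (l 1 1 + 1) := by
  simp only [← measureReal_def] at hmarg₁ hmarg₂ hms hl
  set p := μ.real {ω | X₁ ω ≤ 1 ∧ X₂ ω ≤ 1}
  have hdiag_pow (s : ℝ) (hs : 0 < s) : μ.real {ω | X₁ ω ≤ s ∧ X₂ ω ≤ s} ^ s = p := by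
    simpa using hms s hs 1 1 one_pos one_pos
  have hε : l 1 1 = -Real.log p := by simpa using hl 1 1 zero_le_one zero_le_one
  have hε₀ : 0 ≤ l 1 1 :=
    hε ▸ neg_nonneg.2 (Real.log_nonpos measureReal_nonneg measureReal_le_one)
  have hp : 0 < p := hdiag_pow 2 two_pos ▸
    Real.rpow_pos_of_pos (measureReal_le_two_and_le_two_pos hX₂ hmarg₁ hmarg₂) _
  have hdiag (s : ℝ) (hs : 0 < s) :
      μ.real {ω | X₁ ω ≤ s ∧ X₂ ω ≤ s} = Real.exp (-l 1 1 / s) := by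
    rw [← Real.rpow_rpow_inv measureReal_nonneg hs.ne', hdiag_pow s hs, Real.rpow_def_of_pos hp,
      hε]
    ring_nf
  have hpos₁ := ae_pos_of_measureReal_le_eq_frechetCDF hmarg₁
  have hpos₂ := ae_pos_of_measureReal_le_eq_frechetCDF hmarg₂
  rw [integral_abs_frechetCDF_comp_sub hX₁ hX₂ hpos₁ hpos₂,
    integral_max_frechetCDF_comp hX₁ hX₂ hpos₁ hpos₂ hε₀ hdiag,
    integral_frechetCDF_comp hX₁ hmarg₁, integral_frechetCDF_comp hX₂ hmarg₂]
  field_simp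
  ring
end
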